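/- Let n, k, r be positive integers and λ > 0. Let M*, E ∈ ℝ^{n×n}, and for m = 1,…,k let Z_m ∈ {0,1}^{n×n}, τ*_m ∈ ℝ, δ_m ∈ ℝ^{n×n}. Set O := M* + E + Σ_{m=1}^k (τ*_m Z_m + δ_m ∘ Z_m) and Ê := E + Σ_{m=1}^k δ_m ∘ Z_m. Suppose M̂ ∈ ℝ^{n×n} has a singular value decomposition M̂ = Û Σ̂ V̂ᵀ with Û, V̂ ∈ ℝ^{n×r} having orthonormal columns, and let P_{T̂⊥}(A) := (I − ÛÛᵀ)A(I − V̂V̂ᵀ). Suppose τ̂ ∈ ℝ^k and W ∈ ℝ^{n×n} satisfy the first-order optimality conditions: ⟨Z_l, O − M̂ − Σ_m τ̂_m Z_m⟩ = 0 for every l ∈ {1,…,k}; O − M̂ − Σ_m τ̂_m Z_m = λ(ÛV̂ᵀ + W); and P_{T̂⊥}(W) = W. Then D(τ̂ − τ*) = Δ¹ + Δ² + Δ³, where D ∈ ℝ^{k×k} has entries D_{lm} = ⟨P_{T̂⊥}(Z_l), P_{T̂⊥}(Z_m)⟩ and Δ¹, Δ², Δ³ ∈ ℝ^k have components Δ¹_l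 = λ⟨Z_l, ÛV̂ᵀ⟩, Δ²_l = ⟨P_{T̂⊥}(Z_l), Ê⟩, Δ³_l = ⟨Z_l, P_{T̂⊥}(M*)⟩. -/

import Mathlib

noncomputable section
open Matrix MeasureTheory

namespace Paper

/-- Frobenius (trace) inner product `⟨A,B⟩ = tr(Aᵀ B)`. -/
def finner {m k : Type*} [Fintype m] [Fintype k] (A B : Matrix m k ℝ) : ℝ :=
  Matrix.trace (Aᵀ * B)

/-- Frobenius norm `‖A‖_F`. -/
def fnorm {m k : Type*} [Fintype m] [Fintype k] (A : Matrix m k ℝ) : ℝ :=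
  Real.sqrt (finner A A)

/-- Entrywise max norm `‖A‖_∞`. -/
def infNorm {m k : Type*} [Fintype m] [Fintype k] (A : Matrix m k ℝ) : ℝ :=
  ⨆ i, ⨆ j, |A i j|

/-- Maximum row ℓ₂-norm `‖A‖_{2,∞}`. -/
def rowNorm {m k : Type*} [Fintype m] [Fintype k] (A : Matrix m k ℝ) : ℝ :=
  ⨆ i, Real.sqrt (∑ j, A i j ^ 2)

/-- The (unordered) singular values of a real matrix: the square roots of the
eigenvalues of `Aᴴ * A`. -/
def svals {m k : Type*} [Fintype m] [Fintype k] [DecidableEq k] (A : Matrix m k ℝ) : k → ℝ :=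
  fun j => Real.sqrt ((show (Aᵀ * A).IsHermitian by
    simpa using Matrix.isHermitian_conjTranspose_mul_self A).eigenvalues j)

/-- Spectral (ℓ₂ operator) norm: the largest singular value. -/
def specNorm {m k : Type*} [Fintype m] [Fintype k] [DecidableEq k] (A : Matrix m k ℝ) : ℝ :=
  ⨆ j, svals A j

/-- Nuclear norm `‖A‖_*`: the sum of the singular values. -/
def nucNorm {m k : Type*} [Fintype m] [Fintype k] [DecidableEq k] (A : Matrix m k ℝ) : ℝ :=
  ∑ j, svals A j

/-- The `i`-th largest singular value (singular values in descending order). -/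
def svalDesc {m k : ℕ} (A : Matrix (Fin m) (Fin k) ℝ) (i : Fin k) : ℝ :=
  svals A (Tuple.sort (svals A) i.rev)

/-- Projection onto the orthogonal complement of the tangent space determined by
matrices `U, V` with orthonormal columns: `P_{T⊥}(A) = (I − UUᵀ)A(I − VVᵀ)`. -/
def PTperp {n r : Type*} [Fintype n] [Fintype r] [DecidableEq n]
    (U V : Matrix n r ℝ) (A : Matrix n n ℝ) : Matrix n n ℝ :=
  (1 - U * Uᵀ) * A * (1 - V * Vᵀ)

/-- Projection onto the tangent space: `P_T(A) = A − P_{T⊥}(A)`. -/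
def PTang {n r : Type*} [Fintype n] [Fintype r] [DecidableEq n]
    (U V : Matrix n r ℝ) (A : Matrix n n ℝ) : Matrix n n ℝ :=
  A - PTperp U V A

/-- Rank-one versions of the tangent space projections, built from unit vectors. -/
def PTperpVec {n : Type*} [Fintype n] [DecidableEq n]
    (u v : n → ℝ) (A : Matrix n n ℝ) : Matrix n n ℝ :=
  (1 - Matrix.vecMulVec u u) * A * (1 - Matrix.vecMulVec v v)

def PTangVec {n : Type*} [Fintype n] [DecidableEq n]
    (u v : n → ℝ) (A : Matrix n n ℝ) : Matrix n n ℝ :=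
  A - PTperpVec u v A

/-- A `{0,1}`-valued (treatment) matrix. -/
def IsBinary {n : Type*} (Z : Matrix n n ℝ) : Prop := ∀ i j, Z i j = 0 ∨ Z i j = 1

/-- Sub-Gaussian with ψ₂-Orlicz norm at most `σ`: `E exp((X/σ)²) ≤ 2`. -/
def SubGaussianLe {Ω : Type*} [MeasurableSpace Ω] (μ : Measure Ω) (X : Ω → ℝ) (σ : ℝ) : Prop :=
  ∫ ω, Real.exp ((X ω / σ) ^ 2) ∂μ ≤ 2

/-- A compact singular value decomposition `M = U (diag s) Vᵀ` with orthonormal columns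
and strictly positive singular values. -/
def IsCompactSVD {n r : ℕ} (M : Matrix (Fin n) (Fin n) ℝ)
    (U : Matrix (Fin n) (Fin r) ℝ) (s : Fin r → ℝ) (V : Matrix (Fin n) (Fin r) ℝ) : Prop :=
  Uᵀ * U = 1 ∧ Vᵀ * V = 1 ∧ (∀ i, 0 < s i) ∧ M = U * Matrix.diagonal s * Vᵀ

/-- Objective of the convex program `g(M, τ)`. -/
def gval {n : ℕ} (O Z : Matrix (Fin n) (Fin n) ℝ) (lam : ℝ)
    (M : Matrix (Fin n) (Fin n) ℝ) (τ : ℝ) : ℝ :=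
  1 / 2 * fnorm (O - M - τ • Z) ^ 2 + lam * nucNorm M

/-- `τ(X,Y) = ⟨Z, O − XYᵀ⟩ / ‖Z‖_F²`. -/
def tauOf {n r : ℕ} (Z O : Matrix (Fin n) (Fin n) ℝ)
    (X Y : Matrix (Fin n) (Fin r) ℝ) : ℝ :=
  finner Z (O - X * Yᵀ) / fnorm Z ^ 2

/-- `∇_X f(X,Y;τ)`. -/
def gradX {n r : ℕ} (Z O : Matrix (Fin n) (Fin n) ℝ) (lam : ℝ)
    (X Y : Matrix (Fin n) (Fin r) ℝ) (τ : ℝ) : Matrix (Fin n) (Fin r) ℝ :=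
  (X * Yᵀ + τ • Z - O) * Y + lam • X

/-- `∇_Y f(X,Y;τ)`. -/
def gradY {n r : ℕ} (Z O : Matrix (Fin n) (Fin n) ℝ) (lam : ℝ)
    (X Y : Matrix (Fin n) (Fin r) ℝ) (τ : ℝ) : Matrix (Fin n) (Fin r) ℝ :=
  (X * Yᵀ + τ • Z - O)ᵀ * X + lam • Y

/-- `∇f(X,Y;τ) ∈ ℝ^{2n×r}`: the vertical stacking of `∇_X f` and `∇_Y f`. -/
def gradf {n r : ℕ} (Z O : Matrix (Fin n) (Fin n) ℝ) (lam : ℝ)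
    (X Y : Matrix (Fin n) (Fin r) ℝ) (τ : ℝ) : Matrix (Fin n ⊕ Fin n) (Fin r) ℝ :=
  Matrix.fromRows (gradX Z O lam X Y τ) (gradY Z O lam X Y τ)

/-- The non-convex objective `f(X,Y;τ)`. -/
def fval {n r : ℕ} (Z O : Matrix (Fin n) (Fin n) ℝ) (lam : ℝ)
    (X Y : Matrix (Fin n) (Fin r) ℝ) (τ : ℝ) : ℝ :=
  1 / 2 * fnorm (O - X * Yᵀ - τ • Z) ^ 2 + lam / 2 * fnorm X ^ 2 + lam / 2 * fnorm Y ^ 2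

/-- Algorithm 1 (alternating gradient descent); `τᵗ` is always `tauOf Z O Xᵗ Yᵗ`. -/
def gdIter {n r : ℕ} (Z O : Matrix (Fin n) (Fin n) ℝ) (lam η : ℝ)
    (X0 Y0 : Matrix (Fin n) (Fin r) ℝ) :
    ℕ → Matrix (Fin n) (Fin r) ℝ × Matrix (Fin n) (Fin r) ℝ
  | 0 => (X0, Y0)
  | t + 1 =>
      let p := gdIter Z O lam η X0 Y0 t
      let τ := tauOf Z O p.1 p.2
      (p.1 - η • gradX Z O lam p.1 p.2 τ, p.2 - η • gradY Z O lam p.1 p.2 τ)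

/-- Vertical stacking `F = [X; Y] ∈ ℝ^{2n×r}`. -/
def stack {n r : ℕ} (X Y : Matrix (Fin n) (Fin r) ℝ) : Matrix (Fin n ⊕ Fin n) (Fin r) ℝ :=
  Matrix.fromRows X Y

/-- `H` is an optimal rotation aligning `F` with `Fstar`:
it is orthogonal and minimizes `‖F R − Fstar‖_F` over orthogonal `R`. -/
def IsMinRot {n r : ℕ} (F Fstar : Matrix (Fin n ⊕ Fin n) (Fin r) ℝ)
    (H : Matrix (Fin r) (Fin r) ℝ) : Prop :=
  Hᵀ * H = 1 ∧ ∀ R : Matrix (Fin r) (Fin r) ℝ, Rᵀ * R = 1 →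
    fnorm (F * H - Fstar) ≤ fnorm (F * R - Fstar)

section FrobeniusInner

variable {m k : Type*} [Fintype m] [Fintype k]

lemma finner_add_right (A B C : Matrix m k ℝ) : finner A (B + C) = finner A B + finner A C := by
  simp [finner, Matrix.mul_add]

lemma finner_sub_right (A B C : Matrix m k ℝ) : finner A (B - C) = finner A B - finner A C := by
  simp [finner, Matrix.mul_sub]

lemma finner_smul_right (c : ℝ) (A B : Matrix m k ℝ) : finner A (c • B) = c * finner A B := by
  simp [finner, Matrix.mul_smul]

lemma finner_sum_right {ι : Type*} (s : Finset ι) (A : Matrix m k ℝ) (f : ι → Matrix m k ℝ) :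
    finner A (∑ i ∈ s, f i) = ∑ i ∈ s, finner A (f i) := by
  simp [finner, Matrix.mul_sum]

end FrobeniusInner

lemma isIdempotentElem_mul_transpose {n r : Type*} [Fintype n] [Fintype r] [DecidableEq r]
    {U : Matrix n r ℝ} (hU : Uᵀ * U = 1) : IsIdempotentElem (U * Uᵀ) := by
  rw [IsIdempotentElem, Matrix.mul_assoc, ← Matrix.mul_assoc Uᵀ, hU, Matrix.one_mul]

section TangentProjection

variable {n r : Type*} [Fintype n] [Fintype r] [DecidableEq n]

lemma finner_PTperp_left (U V : Matrix n r ℝ) (A B : Matrix n n ℝ) :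
    finner (PTperp U V A) B = finner A (PTperp U V B) := by
  simp only [finner, PTperp, Matrix.transpose_mul, Matrix.transpose_sub, Matrix.transpose_one,
    Matrix.transpose_transpose]
  rw [Matrix.trace_mul_cycle]
  simp only [← Matrix.mul_assoc]
  rw [Matrix.mul_assoc (B * (1 - V * Vᵀ)) Aᵀ (1 - U * Uᵀ), Matrix.trace_mul_comm]
  simp only [Matrix.mul_assoc]

lemma PTperp_PTperp [DecidableEq r] {U V : Matrix n r ℝ} (hU : Uᵀ * U = 1) (hV : Vᵀ * V = 1)
    (A : Matrix n n ℝ) : PTperp U V (PTperp U V A) = PTperp U V A := by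
  have hU' := (isIdempotentElem_mul_transpose hU).one_sub.eq
  have hV' := (isIdempotentElem_mul_transpose hV).one_sub.eq
  simp only [PTperp, Matrix.mul_assoc] at hV' ⊢
  rw [hV', ← Matrix.mul_assoc, ← Matrix.mul_assoc, hU', Matrix.mul_assoc]

lemma finner_PTperp_PTperp [DecidableEq r] {U V : Matrix n r ℝ} (hU : Uᵀ * U = 1)
    (hV : Vᵀ * V = 1) (A B : Matrix n n ℝ) :
    finner (PTperp U V A) (PTperp U V B) = finner (PTperp U V A) B := by
  rw [finner_PTperp_left, PTperp_PTperp hU hV, finner_PTperp_left]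

lemma PTperp_mul_eq_zero [DecidableEq r] {U : Matrix n r ℝ} (V : Matrix n r ℝ) (hU : Uᵀ * U = 1)
    (C : Matrix r n ℝ) : PTperp U V (U * C) = 0 := by
  have h : (1 - U * Uᵀ) * U = 0 := by
    rw [Matrix.sub_mul, Matrix.one_mul, Matrix.mul_assoc, hU, Matrix.mul_one, sub_self]
  rw [PTperp, ← Matrix.mul_assoc, h, Matrix.zero_mul, Matrix.zero_mul]

lemma finner_PTperp_mul_eq_zero [DecidableEq r] {U : Matrix n r ℝ} (V : Matrix n r ℝ)
    (hU : Uᵀ * U = 1) (A : Matrix n n ℝ) (C : Matrix r n ℝ) :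
    finner (PTperp U V A) (U * C) = 0 := by
  rw [finner_PTperp_left, PTperp_mul_eq_zero V hU, finner, Matrix.mul_zero, Matrix.trace_zero]

end TangentProjection

theorem stmt0_general
    (n k r : ℕ)
    (lam : ℝ)
    (Mstar E : Matrix (Fin n) (Fin n) ℝ)
    (Z : Fin k → Matrix (Fin n) (Fin n) ℝ)
    (τstar : Fin k → ℝ) (δ : Fin k → Matrix (Fin n) (Fin n) ℝ)
    (O Ehat : Matrix (Fin n) (Fin n) ℝ)
    (hO : O = Mstar + E + ∑ m, (τstar m • Z m + Matrix.hadamard (δ m) (Z m)))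
    (hEhat : Ehat = E + ∑ m, Matrix.hadamard (δ m) (Z m))
    (Mhat : Matrix (Fin n) (Fin n) ℝ)
    (Uhat Vhat : Matrix (Fin n) (Fin r) ℝ) (shat : Fin r → ℝ)
    (hUhat : Uhatᵀ * Uhat = 1) (hVhat : Vhatᵀ * Vhat = 1)
    (hSVD : Mhat = Uhat * Matrix.diagonal shat * Vhatᵀ)
    (τhat : Fin k → ℝ) (W : Matrix (Fin n) (Fin n) ℝ)
    (hfoc1 : ∀ l, finner (Z l) (O - Mhat - ∑ m, τhat m • Z m) = 0)
    (hfoc2 : O - Mhat - ∑ m, τhat m • Z m = lam • (Uhat * Vhatᵀ + W))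
    (hfoc3 : PTperp Uhat Vhat W = W) :
    ∀ l : Fin k,
      (∑ m, finner (PTperp Uhat Vhat (Z l)) (PTperp Uhat Vhat (Z m)) * (τhat m - τstar m))
        = lam * finner (Z l) (Uhat * Vhatᵀ)
          + finner (PTperp Uhat Vhat (Z l)) Ehat
          + finner (Z l) (PTperp Uhat Vhat Mstar) := by
  intro l
  have hres : O - Mhat - ∑ m, τhat m • Z m
      = Mstar + Ehat - Uhat * (Matrix.diagonal shat * Vhatᵀ)
        - ∑ m, (τhat m - τstar m) • Z m := by
    rw [hO, hEhat, hSVD, Matrix.mul_assoc]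
    simp only [sub_smul, Finset.sum_add_distrib, Finset.sum_sub_distrib]
    abel
  -- Pairing the stationarity condition with `P_{T⊥}(Z l)` removes `M̂` and `Û V̂ᵀ` and leaves
  -- `λ ⟨Z l, W⟩`; pairing it with `Z l` instead turns that into `-λ ⟨Z l, Û V̂ᵀ⟩`.
  have hpair := congrArg (finner (PTperp Uhat Vhat (Z l))) hfoc2
  rw [hres, finner_smul_right, finner_add_right, finner_PTperp_left _ _ _ W, hfoc3] at hpair
  simp only [finner_sub_right, finner_add_right, finner_sum_right, finner_smul_right] at hpair
  rw [finner_PTperp_mul_eq_zero Vhat hUhat, finner_PTperp_mul_eq_zero Vhat hUhat,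
    finner_PTperp_left _ _ (Z l) Mstar] at hpair
  have hZl := hfoc1 l
  rw [hfoc2, finner_smul_right, finner_add_right] at hZl
  simp only [finner_PTperp_PTperp hUhat hVhat, mul_comm (finner _ _)] at hpair ⊢
  linear_combination -hpair - hZl

/-- de-biasing identity for multiple treatments, Lemma 1 of the paper. -/
theorem stmt0
    (n k r : ℕ) (hn : 0 < n) (hk : 0 < k) (hr : 0 < r)
    (lam : ℝ) (hlam : 0 < lam)
    (Mstar E : Matrix (Fin n) (Fin n) ℝ)
    (Z : Fin k → Matrix (Fin n) (Fin n) ℝ) (hZ : ∀ m, IsBinary (Z m))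
    (τstar : Fin k → ℝ) (δ : Fin k → Matrix (Fin n) (Fin n) ℝ)
    (O Ehat : Matrix (Fin n) (Fin n) ℝ)
    (hO : O = Mstar + E + ∑ m, (τstar m • Z m + Matrix.hadamard (δ m) (Z m)))
    (hEhat : Ehat = E + ∑ m, Matrix.hadamard (δ m) (Z m))
    (Mhat : Matrix (Fin n) (Fin n) ℝ)
    (Uhat Vhat : Matrix (Fin n) (Fin r) ℝ) (shat : Fin r → ℝ)
    (hUhat : Uhatᵀ * Uhat = 1) (hVhat : Vhatᵀ * Vhat = 1)
    (hshat : ∀ i, 0 ≤ shat i)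
    (hSVD : Mhat = Uhat * Matrix.diagonal shat * Vhatᵀ)
    (τhat : Fin k → ℝ) (W : Matrix (Fin n) (Fin n) ℝ)
    (hfoc1 : ∀ l, finner (Z l) (O - Mhat - ∑ m, τhat m • Z m) = 0)
    (hfoc2 : O - Mhat - ∑ m, τhat m • Z m = lam • (Uhat * Vhatᵀ + W))
    (hfoc3 : PTperp Uhat Vhat W = W) :
    ∀ l : Fin k,
      (∑ m, finner (PTperp Uhat Vhat (Z l)) (PTperp Uhat Vhat (Z m)) * (τhat m - τstar m))
        = lam * finner (Z l) (Uhat * Vhatᵀ)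
          + finner (PTperp Uhat Vhat (Z l)) Ehat
          + finner (Z l) (PTperp Uhat Vhat Mstar) :=
  stmt0_general n k r lam Mstar E Z τstar δ O Ehat hO hEhat Mhat Uhat Vhat shat hUhat hVhat hSVD
    τhat W hfoc1 hfoc2 hfoc3

end Paper
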